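/- arXiv:1308.2558 — 7 statements merged into one kernel-verified Lean document; each statement's English description precedes it below -/
import Mathlib

section
/- For every f ∈ M̃ with ord f = 0 there exist a unique f₀ ∈ M̂ and f₁ ∈ M̃ such that f = f₀ + x12·f₁. -/
/- Common setup: K = ℂ(x11,x12,x13,x21,x22,x23,s1,s2,s3) realized as the fraction
field of the polynomial ring in nine variables over ℂ.  Variable indices:
0 = x11, 1 = x12, 2 = x13, 3 = x21, 4 = x22, 5 = x23, 6 = s1, 7 = s2, 8 = s3. -/

noncomputable section

open MvPolynomial

abbrev Kf : Type := FractionRing (MvPolynomial (Fin 9) ℂ)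

def Xv (i : Fin 9) : Kf := algebraMap (MvPolynomial (Fin 9) ℂ) Kf (MvPolynomial.X i)

def x11 : Kf := Xv 0
def x12 : Kf := Xv 1
def x13 : Kf := Xv 2
def x21 : Kf := Xv 3
def x22 : Kf := Xv 4
def x23 : Kf := Xv 5
def s1 : Kf := Xv 6
def s2 : Kf := Xv 7
def s3 : Kf := Xv 8

/-- Δ = x11·x23 − x13·x21 -/
def Δl : Kf := x11 * x23 - x13 * x21
/-- p0 = x11·x13·x22² + Δ² -/
def p0 : Kf := x11 * x13 * x22 ^ 2 + Δl ^ 2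
/-- p1 = x22·(x13·x21 + x11·x23) -/
def p1 : Kf := x22 * (x13 * x21 + x11 * x23)
/-- p2 = x21·x23 -/
def p2 : Kf := x21 * x23
/-- p = p0 − x12·p1 + x12²·p2 -/
def pp : Kf := p0 - x12 * p1 + x12 ^ 2 * p2

/-- M: the localization of ℂ[x11,x13,x21,s1,s2,s3] at the multiplicative set
generated by x11·x13·x21, viewed as a subring of K (equivalently, the
ℂ-subalgebra of K generated by the six variables and (x11·x13·x21)⁻¹). -/
def Msub : Subalgebra ℂ Kf :=
  Algebra.adjoin ℂ ({x11, x13, x21, s1, s2, s3, (x11 * x13 * x21)⁻¹} : Set Kf)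

/-- M̂: the localization of M[x22,x23] at p0, viewed as a subring of K. -/
def Mhat : Subalgebra ℂ Kf :=
  Algebra.adjoin ℂ
    ({x11, x13, x21, s1, s2, s3, (x11 * x13 * x21)⁻¹, x22, x23, p0⁻¹} : Set Kf)

/-- M̃: the localization of M̂[x12] at p, viewed as a subring of K. -/
def Mtilde : Subalgebra ℂ Kf :=
  Algebra.adjoin ℂ
    ({x11, x13, x21, s1, s2, s3, (x11 * x13 * x21)⁻¹, x22, x23, p0⁻¹, x12, pp⁻¹} : Set Kf)

/-- ord f : the largest ν ≥ 0 with f ∈ x12^ν·M̃ (and ord 0 = ∞, since 0 lies in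
every x12^ν·M̃; for f ∉ M̃ the defining set is empty and the sSup is 0). -/
def ord (f : Kf) : ℕ∞ :=
  sSup ((↑) '' {ν : ℕ | ∃ g ∈ Mtilde, f = x12 ^ ν * g})

/-- values of the derivation D1 on the nine variables, up to the common factor
(2/3)·x12: D1 = (2/3)·x12·(−x11·∂_{x11} + x13·∂_{x13} + x21·∂_{x21}
+ 2·x22·∂_{x22} + s1·∂_{s1} + 2·s2·∂_{s2}). -/
def D1vals : Fin 9 → Kf := ![-x11, 0, x13, x21, 2 * x22, 0, s1, 2 * s2, 0]

/-- values of the derivation D2 = 2(x13·x21 − x11·x23)·∂_{x22} + 2·x13·x22·∂_{x23}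
on the nine variables. -/
def D2vals : Fin 9 → Kf :=
  ![0, 0, 0, 0, 2 * (x13 * x21 - x11 * x23), 2 * x13 * x22, 0, 0, 0]


/-! Every generator of M̃ except `x12` and `p⁻¹` already lies in M̂, and
`p⁻¹ = p0⁻¹ + x12·(p1 − x12·p2)·p0⁻¹·p⁻¹` since `p ≡ p0 mod x12`; as M̂ + x12·M̃ is a subalgebra,
it contains M̃. For uniqueness, elements of M̃ are fractions `a / q` of polynomials with
`q(x12 = 0) ≠ 0`, while elements of M̂ are fractions not involving `x12`; clearing denominators
in `g = x12·h` and setting `x12 = 0` shows `g = 0`. -/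

section FractionSubalgebra

variable {R A K : Type*} [CommRing R] [CommRing A] [Nontrivial A] [Algebra R A] [Field K]
  [Algebra A K] [IsFractionRing A K] [Algebra R K] [IsScalarTower R A K]

def fractionSubalgebra (N : Subalgebra R A) (D : Submonoid A) (hDN : D ≤ N.toSubmonoid)
    (hD : D ≤ nonZeroDivisors A) : Subalgebra R K where
  carrier := {f | ∃ a ∈ N, ∃ q ∈ D, f = algebraMap A K a / algebraMap A K q}
  mul_mem' := by
    rintro _ _ ⟨a, ha, q, hq, rfl⟩ ⟨b, hb, r, hr, rfl⟩
    exact ⟨a * b, N.mul_mem ha hb, q * r, D.mul_mem hq hr,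
      by rw [map_mul, map_mul, div_mul_div_comm]⟩
  add_mem' := by
    rintro _ _ ⟨a, ha, q, hq, rfl⟩ ⟨b, hb, r, hr, rfl⟩
    refine ⟨a * r + q * b, N.add_mem (N.mul_mem ha (hDN hr)) (N.mul_mem (hDN hq) hb),
      q * r, D.mul_mem hq hr, ?_⟩
    rw [div_add_div _ _ (IsFractionRing.to_map_ne_zero_of_mem_nonZeroDivisors (hD hq))
      (IsFractionRing.to_map_ne_zero_of_mem_nonZeroDivisors (hD hr))]
    simp only [map_add, map_mul]
  algebraMap_mem' r := ⟨algebraMap R A r, N.algebraMap_mem r, 1, D.one_mem,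
    by rw [map_one, div_one, IsScalarTower.algebraMap_apply R A K]⟩

variable {N : Subalgebra R A} {D : Submonoid A} {hDN : D ≤ N.toSubmonoid}
  {hD : D ≤ nonZeroDivisors A}

theorem algebraMap_mem_fractionSubalgebra {a : A} (ha : a ∈ N) :
    algebraMap A K a ∈ fractionSubalgebra N D hDN hD :=
  ⟨a, ha, 1, D.one_mem, by rw [map_one, div_one]⟩

theorem inv_algebraMap_mem_fractionSubalgebra {q : A} (hq : q ∈ D) :
    (algebraMap A K q)⁻¹ ∈ fractionSubalgebra N D hDN hD :=
  ⟨1, N.one_mem, q, hq, by rw [map_one, one_div]⟩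

end FractionSubalgebra

section Specialization

variable {R A K : Type*} [CommRing R] [CommRing A] [IsDomain A] [Algebra R A] [Field K]
  [Algebra A K] [IsFractionRing A K] [Algebra R K] [IsScalarTower R A K] (e : A →ₐ[R] A)

def fixedFractions : Subalgebra R K :=
  fractionSubalgebra (AlgHom.equalizer e (AlgHom.id R A))
    ((AlgHom.equalizer e (AlgHom.id R A)).toSubmonoid ⊓ nonZeroDivisors A) inf_le_left inf_le_right

/-- Fractions `a / q` whose denominator survives the specialization `e`: `e q ≠ 0`. -/
def regularFractions : Subalgebra R K :=
  fractionSubalgebra ⊤ ((nonZeroDivisors A).comap e) (fun _ _ ↦ Algebra.mem_top)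
    (fun q hq ↦ mem_nonZeroDivisors_of_ne_zero (by rintro rfl; simp at hq))

variable {e}

theorem algebraMap_mem_fixedFractions {a : A} (ha : e a = a) :
    algebraMap A K a ∈ fixedFractions (K := K) e :=
  algebraMap_mem_fractionSubalgebra ha

theorem inv_algebraMap_mem_fixedFractions {q : A} (hq : e q = q) (hq0 : q ≠ 0) :
    (algebraMap A K q)⁻¹ ∈ fixedFractions (K := K) e :=
  inv_algebraMap_mem_fractionSubalgebra ⟨hq, mem_nonZeroDivisors_of_ne_zero hq0⟩

theorem algebraMap_mem_regularFractions (a : A) :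
    algebraMap A K a ∈ regularFractions (K := K) e :=
  algebraMap_mem_fractionSubalgebra Algebra.mem_top

theorem inv_algebraMap_mem_regularFractions {q : A} (hq : e q ≠ 0) :
    (algebraMap A K q)⁻¹ ∈ regularFractions (K := K) e :=
  inv_algebraMap_mem_fractionSubalgebra (mem_nonZeroDivisors_of_ne_zero hq)

theorem eq_zero_of_eq_algebraMap_mul {t : A} (ht : e t = 0) {g h : K}
    (hg : g ∈ fixedFractions e) (hh : h ∈ regularFractions e)
    (hgh : g = algebraMap A K t * h) : g = 0 := by
  obtain ⟨a, ha, q, ⟨-, hq⟩, rfl⟩ := hg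
  obtain ⟨b, -, r, hr, rfl⟩ := hh
  have hr0 : r ≠ 0 := by rintro rfl; simp at hr
  have hclear : a * r = t * b * q := by
    apply IsFractionRing.injective A K
    have := IsFractionRing.to_map_ne_zero_of_mem_nonZeroDivisors (K := K) hq
    have := IsFractionRing.to_map_ne_zero_of_mem_nonZeroDivisors (K := K)
      (mem_nonZeroDivisors_of_ne_zero hr0)
    field_simp at hgh
    simp only [map_mul]
    linear_combination hgh
  have hspec : a * e r = 0 := by
    simpa [(AlgHom.mem_equalizer _ _ _).mp ha, ht] using congrArg e hclear
  rw [(mul_eq_zero.mp hspec).resolve_right (nonZeroDivisors.ne_zero hr), map_zero, zero_div]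

end Specialization

theorem exists_add_mul_of_mem_adjoin {R B : Type*} [CommRing R] [CommRing B] [Algebra R B]
    {S T : Subalgebra R B} (hST : S ≤ T) {t : B} (ht : t ∈ T) {s : Set B}
    (hs : ∀ x ∈ s, ∃ a ∈ S, ∃ b ∈ T, x = a + t * b) {f : B} (hf : f ∈ Algebra.adjoin R s) :
    ∃ a ∈ S, ∃ b ∈ T, f = a + t * b := by
  induction hf using Algebra.adjoin_induction with
  | mem x hx => exact hs x hx
  | algebraMap r => exact ⟨algebraMap R B r, S.algebraMap_mem r, 0, T.zero_mem, by ring⟩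
  | add x y _ _ hx hy =>
    obtain ⟨a, ha, b, hb, rfl⟩ := hx
    obtain ⟨c, hc, d, hd, rfl⟩ := hy
    exact ⟨a + c, S.add_mem ha hc, b + d, T.add_mem hb hd, by ring⟩
  | mul x y _ _ hx hy =>
    obtain ⟨a, ha, b, hb, rfl⟩ := hx
    obtain ⟨c, hc, d, hd, rfl⟩ := hy
    refine ⟨a * c, S.mul_mem ha hc, a * d + b * c + t * (b * d), ?_, by ring⟩
    exact T.add_mem (T.add_mem (T.mul_mem (hST ha) hd) (T.mul_mem hb (hST hc)))
      (T.mul_mem ht (T.mul_mem hb hd))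

def specializeX12 : MvPolynomial (Fin 9) ℂ →ₐ[ℂ] MvPolynomial (Fin 9) ℂ :=
  aeval (Function.update X 1 0)

theorem specializeX12_X_of_ne {i : Fin 9} (hi : i ≠ 1) : specializeX12 (X i) = X i := by
  simp [specializeX12, Function.update_of_ne hi]

theorem specializeX12_X_one : specializeX12 (X 1) = 0 := by
  simp [specializeX12]

def P0 : MvPolynomial (Fin 9) ℂ := X 0 * X 2 * X 4 ^ 2 + (X 0 * X 5 - X 2 * X 3) ^ 2

def P : MvPolynomial (Fin 9) ℂ :=
  P0 - X 1 * (X 4 * (X 2 * X 3 + X 0 * X 5)) + X 1 ^ 2 * (X 3 * X 5)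

theorem algebraMap_P0 : algebraMap _ Kf P0 = p0 := by
  simp [P0, p0, Δl, x11, x13, x21, x22, x23, Xv]

theorem algebraMap_P : algebraMap _ Kf P = pp := by
  simp [P, pp, p1, p2, algebraMap_P0, x11, x12, x13, x21, x22, x23, Xv]

theorem algebraMap_X0_mul_X2_mul_X3 :
    algebraMap _ Kf (X 0 * X 2 * X 3 : MvPolynomial (Fin 9) ℂ) = x11 * x13 * x21 := by
  simp [x11, x13, x21, Xv]

theorem specializeX12_P0 : specializeX12 P0 = P0 := by
  simp [P0, specializeX12_X_of_ne]

theorem specializeX12_P : specializeX12 P = P0 := by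
  simp [P, specializeX12_P0, specializeX12_X_of_ne, specializeX12_X_one]

theorem specializeX12_X0_mul_X2_mul_X3 :
    specializeX12 (X 0 * X 2 * X 3 : MvPolynomial (Fin 9) ℂ) = X 0 * X 2 * X 3 := by
  simp [specializeX12_X_of_ne]

theorem P0_ne_zero : P0 ≠ 0 := fun h ↦ by
  simpa [P0] using congrArg (eval (fun i ↦ if i = 5 then 0 else 1)) h

theorem X0_mul_X2_mul_X3_ne_zero : (X 0 * X 2 * X 3 : MvPolynomial (Fin 9) ℂ) ≠ 0 := by
  simp [X_ne_zero]

theorem p0_ne_zero : p0 ≠ 0 := by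
  rw [← algebraMap_P0]
  exact (map_ne_zero_iff _ (IsFractionRing.injective _ Kf)).mpr P0_ne_zero

theorem pp_ne_zero : pp ≠ 0 := by
  rw [← algebraMap_P]
  refine (map_ne_zero_iff _ (IsFractionRing.injective _ Kf)).mpr fun h ↦ P0_ne_zero ?_
  rw [← specializeX12_P, h, map_zero]

theorem x12_ne_zero : x12 ≠ 0 :=
  (map_ne_zero_iff _ (IsFractionRing.injective _ Kf)).mpr (X_ne_zero 1)

theorem Mhat_le_fixedFractions : Mhat ≤ fixedFractions specializeX12 := by
  have hX (i : Fin 9) (hi : i ≠ 1) : Xv i ∈ fixedFractions (K := Kf) specializeX12 :=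
    algebraMap_mem_fixedFractions (specializeX12_X_of_ne hi)
  rw [Mhat, Algebra.adjoin_le_iff]
  simp only [Set.insert_subset_iff, Set.singleton_subset_iff]
  refine ⟨hX 0 (by decide), hX 2 (by decide), hX 3 (by decide), hX 6 (by decide),
    hX 7 (by decide), hX 8 (by decide), ?_, hX 4 (by decide), hX 5 (by decide), ?_⟩
  · rw [← algebraMap_X0_mul_X2_mul_X3]
    exact inv_algebraMap_mem_fixedFractions specializeX12_X0_mul_X2_mul_X3
      X0_mul_X2_mul_X3_ne_zero
  · rw [← algebraMap_P0]
    exact inv_algebraMap_mem_fixedFractions specializeX12_P0 P0_ne_zero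

theorem Mtilde_le_regularFractions : Mtilde ≤ regularFractions specializeX12 := by
  have hX (i : Fin 9) : Xv i ∈ regularFractions (K := Kf) specializeX12 :=
    algebraMap_mem_regularFractions _
  rw [Mtilde, Algebra.adjoin_le_iff]
  simp only [Set.insert_subset_iff, Set.singleton_subset_iff]
  refine ⟨hX 0, hX 2, hX 3, hX 6, hX 7, hX 8, ?_, hX 4, hX 5, ?_, hX 1, ?_⟩
  · rw [← algebraMap_X0_mul_X2_mul_X3]
    refine inv_algebraMap_mem_regularFractions ?_
    rw [specializeX12_X0_mul_X2_mul_X3]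
    exact X0_mul_X2_mul_X3_ne_zero
  · rw [← algebraMap_P0]
    refine inv_algebraMap_mem_regularFractions ?_
    rw [specializeX12_P0]
    exact P0_ne_zero
  · rw [← algebraMap_P]
    refine inv_algebraMap_mem_regularFractions ?_
    rw [specializeX12_P]
    exact P0_ne_zero

theorem eq_zero_of_mem_Mhat_of_eq_x12_mul {g h : Kf} (hg : g ∈ Mhat) (hh : h ∈ Mtilde)
    (hgh : g = x12 * h) : g = 0 :=
  eq_zero_of_eq_algebraMap_mul specializeX12_X_one (Mhat_le_fixedFractions hg)
    (Mtilde_le_regularFractions hh) hgh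

theorem Mhat_le_Mtilde : Mhat ≤ Mtilde := by
  refine Algebra.adjoin_mono fun x hx ↦ ?_
  simp only [Set.mem_insert_iff, Set.mem_singleton_iff] at hx ⊢
  tauto

theorem mem_Mtilde_of_mem {x : Kf} (hx : x ∈ ({x11, x13, x21, s1, s2, s3, (x11 * x13 * x21)⁻¹,
    x22, x23, p0⁻¹, x12, pp⁻¹} : Set Kf)) : x ∈ Mtilde :=
  Algebra.subset_adjoin hx

theorem inv_pp_eq : pp⁻¹ = p0⁻¹ + x12 * ((p1 - x12 * p2) * p0⁻¹ * pp⁻¹) := by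
  have := p0_ne_zero
  have := pp_ne_zero
  field_simp
  rw [pp]
  ring

theorem exists_eq_add_x12_mul {f : Kf} (hf : f ∈ Mtilde) :
    ∃ a ∈ Mhat, ∃ b ∈ Mtilde, f = a + x12 * b := by
  refine exists_add_mul_of_mem_adjoin Mhat_le_Mtilde (mem_Mtilde_of_mem (by simp))
    (fun x hx ↦ ?_) hf
  have hx' : x ∈ ({x11, x13, x21, s1, s2, s3, (x11 * x13 * x21)⁻¹, x22, x23, p0⁻¹} : Set Kf) ∨
      x = x12 ∨ x = pp⁻¹ := by
    simp only [Set.mem_insert_iff, Set.mem_singleton_iff] at hx ⊢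
    tauto
  rcases hx' with hx | rfl | rfl
  · exact ⟨x, Algebra.subset_adjoin hx, 0, Mtilde.zero_mem, by ring⟩
  · exact ⟨0, Mhat.zero_mem, 1, Mtilde.one_mem, by ring⟩
  · have hp1 : p1 ∈ Mtilde := by
      rw [p1]
      exact mul_mem (mem_Mtilde_of_mem (by simp)) (add_mem
        (mul_mem (mem_Mtilde_of_mem (by simp)) (mem_Mtilde_of_mem (by simp)))
        (mul_mem (mem_Mtilde_of_mem (by simp)) (mem_Mtilde_of_mem (by simp))))
    have hp2 : p2 ∈ Mtilde :=
      mul_mem (mem_Mtilde_of_mem (by simp)) (mem_Mtilde_of_mem (by simp))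
    refine ⟨p0⁻¹, Algebra.subset_adjoin (by simp), _, ?_, inv_pp_eq⟩
    exact mul_mem (mul_mem (sub_mem hp1 (mul_mem (mem_Mtilde_of_mem (by simp)) hp2))
      (mem_Mtilde_of_mem (by simp))) (mem_Mtilde_of_mem (by simp))

theorem statement_0_general (f : Kf) (hf : f ∈ Mtilde) :
    ∃! fp : Kf × Kf, fp.1 ∈ Mhat ∧ fp.2 ∈ Mtilde ∧ f = fp.1 + x12 * fp.2 := by
  obtain ⟨a, ha, b, hb, rfl⟩ := exists_eq_add_x12_mul hf
  refine ⟨(a, b), ⟨ha, hb, rfl⟩, ?_⟩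
  rintro ⟨c, d⟩ ⟨hc, hd, hcd⟩
  have hca : c - a = 0 :=
    eq_zero_of_mem_Mhat_of_eq_x12_mul (sub_mem hc ha) (sub_mem hb hd) (by linear_combination -hcd)
  have hdb : x12 * (d - b) = 0 := by linear_combination -hcd - hca
  rw [sub_eq_zero] at hca
  rw [mul_eq_zero, sub_eq_zero] at hdb
  rw [hca, hdb.resolve_left x12_ne_zero]

/-- For every f ∈ M̃ with ord f = 0 there exist a unique f₀ ∈ M̂ and
f₁ ∈ M̃ such that f = f₀ + x12·f₁. -/
theorem statement_0 (f : Kf) (hf : f ∈ Mtilde) (hord : ord f = 0) :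
    ∃! fp : Kf × Kf, fp.1 ∈ Mhat ∧ fp.2 ∈ Mtilde ∧ f = fp.1 + x12 * fp.2 :=
  statement_0_general f hf
end
end

section
/- For every f ∈ M̃ one has D1(f) ∈ M̃ and D2(f) ∈ M̃, and moreover ord(D1(f)) ≥ ord f + 1 and ord(D2(f)) ≥ ord f. -/
/- Common setup: K = ℂ(x11,x12,x13,x21,x22,x23,s1,s2,s3) realized as the fraction
field of the polynomial ring in nine variables over ℂ.  Variable indices:
0 = x11, 1 = x12, 2 = x13, 3 = x21, 4 = x22, 5 = x23, 6 = s1, 7 = s2, 8 = s3. -/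

noncomputable section

open MvPolynomial

/-! The elements `a ∈ M̃` with `D a ∈ c·M̃` form a subalgebra, by the Leibniz rule, and it is
closed under taking those inverses that lie in `M̃`, since `D a⁻¹ = -a⁻² D a`. Both derivations
send every variable into `x12^k·M̃` (with `k = 1` for `D1` and `k = 0` for `D2`), so this
subalgebra contains the generators of `M̃` and hence all of `M̃`. As both derivations kill `x12`,
`D (x12^ν g) = x12^ν D g ∈ x12^(ν+k)·M̃`, which gives `ord (D f) ≥ ord f + k`. -/

namespace Derivation

section CommSemiring

variable {R A : Type*} [CommSemiring R] [CommSemiring A] [Algebra R A] (D : Derivation R A A)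

theorem map_pow_mul_of_map_eq_zero {t : A} (ht : D t = 0) (n : ℕ) (g : A) :
    D (t ^ n * g) = t ^ n * D g := by
  simp [D.leibniz, D.leibniz_pow, ht]

def mulStableSubalgebra (B : Subalgebra R A) (c : A) : Subalgebra R A where
  carrier := {a | a ∈ B ∧ ∃ h ∈ B, D a = c * h}
  mul_mem' := by
    rintro a b ⟨ha, h₁, h₁B, e₁⟩ ⟨hb, h₂, h₂B, e₂⟩
    exact ⟨mul_mem ha hb, a * h₂ + b * h₁, add_mem (mul_mem ha h₂B) (mul_mem hb h₁B), by
      rw [D.leibniz, smul_eq_mul, smul_eq_mul, e₁, e₂]; ring⟩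
  add_mem' := by
    rintro a b ⟨ha, h₁, h₁B, e₁⟩ ⟨hb, h₂, h₂B, e₂⟩
    exact ⟨add_mem ha hb, h₁ + h₂, add_mem h₁B h₂B, by rw [map_add, e₁, e₂, mul_add]⟩
  algebraMap_mem' r := ⟨B.algebraMap_mem r, 0, zero_mem B, by simp⟩

end CommSemiring

theorem inv_mem_mulStableSubalgebra {R K : Type*} [CommRing R] [Field K] [Algebra R K]
    {D : Derivation R K K} {B : Subalgebra R K} {c a : K} (ha : a ∈ D.mulStableSubalgebra B c)
    (ha' : a⁻¹ ∈ B) : a⁻¹ ∈ D.mulStableSubalgebra B c := by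
  obtain ⟨-, h, hB, e⟩ := ha
  exact ⟨ha', -a⁻¹ ^ 2 * h, mul_mem (neg_mem (pow_mem ha' 2)) hB, by
    rw [D.leibniz_inv, smul_eq_mul, e]; ring⟩

end Derivation

theorem ENat.sSup_image_natCast_add_le {S T : Set ℕ} (hS : S.Nonempty) (k : ℕ)
    (h : ∀ n ∈ S, n + k ∈ T) :
    sSup (((↑) : ℕ → ℕ∞) '' S) + k ≤ sSup (((↑) : ℕ → ℕ∞) '' T) := by
  rw [ENat.sSup_add (hS.image _)]
  refine iSup₂_le ?_
  rintro - ⟨n, hn, rfl⟩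
  exact_mod_cast le_sSup (Set.mem_image_of_mem _ (h n hn))

theorem Xv_mem_Mtilde (i : Fin 9) : Xv i ∈ Mtilde := by
  fin_cases i <;> exact Algebra.subset_adjoin (by simp [x11, x12, x13, x21, x22, x23, s1, s2, s3])

theorem Mtilde_le {S : Subalgebra ℂ Kf} (hX : ∀ i, Xv i ∈ S) (hu : (x11 * x13 * x21)⁻¹ ∈ S)
    (hp0 : p0⁻¹ ∈ S) (hp : pp⁻¹ ∈ S) : Mtilde ≤ S := by
  refine Algebra.adjoin_le ?_
  rintro y (rfl | rfl | rfl | rfl | rfl | rfl | rfl | rfl | rfl | rfl | rfl | rfl)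
  exacts [hX 0, hX 2, hX 3, hX 6, hX 7, hX 8, hu, hX 4, hX 5, hp0, hX 1, hp]

theorem Mtilde_le_mulStableSubalgebra (D : Derivation ℂ Kf Kf) {c : Kf}
    (hD : ∀ i, ∃ h ∈ Mtilde, D (Xv i) = c * h) : Mtilde ≤ D.mulStableSubalgebra Mtilde c := by
  set S := D.mulStableSubalgebra Mtilde c
  have hX : ∀ i, Xv i ∈ S := fun i => ⟨Xv_mem_Mtilde i, hD i⟩
  have hu : x11 * x13 * x21 ∈ S := mul_mem (mul_mem (hX 0) (hX 2)) (hX 3)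
  have hp0 : p0 ∈ S := add_mem (mul_mem (mul_mem (hX 0) (hX 2)) (pow_mem (hX 4) 2))
    (pow_mem (sub_mem (mul_mem (hX 0) (hX 5)) (mul_mem (hX 2) (hX 3))) 2)
  have hpp : pp ∈ S := add_mem (sub_mem hp0 (mul_mem (hX 1)
    (mul_mem (hX 4) (add_mem (mul_mem (hX 2) (hX 3)) (mul_mem (hX 0) (hX 5))))))
    (mul_mem (pow_mem (hX 1) 2) (mul_mem (hX 3) (hX 5)))
  exact Mtilde_le hX
    (Derivation.inv_mem_mulStableSubalgebra hu (Algebra.subset_adjoin (by simp)))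
    (Derivation.inv_mem_mulStableSubalgebra hp0 (Algebra.subset_adjoin (by simp)))
    (Derivation.inv_mem_mulStableSubalgebra hpp (Algebra.subset_adjoin (by simp)))

theorem add_le_ord_map {D : Derivation ℂ Kf Kf} {k : ℕ} (hx12 : D x12 = 0)
    (hD : ∀ a ∈ Mtilde, ∃ h ∈ Mtilde, D a = x12 ^ k * h) {f : Kf} (hf : f ∈ Mtilde) :
    ord f + k ≤ ord (D f) := by
  refine ENat.sSup_image_natCast_add_le ?_ k ?_
  · exact ⟨0, f, hf, by simp⟩
  rintro n ⟨g, hg, rfl⟩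
  obtain ⟨h, hh, e⟩ := hD g hg
  exact ⟨h, hh, by rw [D.map_pow_mul_of_map_eq_zero hx12, e, pow_add, mul_assoc]⟩

theorem D1vals_mem (i : Fin 9) : D1vals i ∈ Mtilde := by
  fin_cases i <;>
    simp only [D1vals, Fin.zero_eta, Fin.mk_one, Fin.reduceFinMk, Fin.isValue,
      Matrix.cons_val_zero, Matrix.cons_val_one, Matrix.cons_val, zero_mem, neg_mem_iff] <;>
    apply_rules [mul_mem, ofNat_mem, Xv_mem_Mtilde]

theorem D2vals_mem (i : Fin 9) : D2vals i ∈ Mtilde := by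
  fin_cases i <;>
    simp only [D2vals, Fin.zero_eta, Fin.mk_one, Fin.reduceFinMk, Fin.isValue,
      Matrix.cons_val_zero, Matrix.cons_val_one, Matrix.cons_val, zero_mem] <;>
    apply_rules [mul_mem, sub_mem, ofNat_mem, Xv_mem_Mtilde]

/-- for every f ∈ M̃, D1(f), D2(f) ∈ M̃, ord(D1 f) ≥ ord f + 1 and
ord(D2 f) ≥ ord f. -/
theorem statement_2 (D1 D2 : Derivation ℂ Kf Kf)
    (hD1 : ∀ i, D1 (Xv i) = (2 / 3 : Kf) * x12 * D1vals i)
    (hD2 : ∀ i, D2 (Xv i) = D2vals i)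
    (f : Kf) (hf : f ∈ Mtilde) :
    (D1 f ∈ Mtilde ∧ D2 f ∈ Mtilde) ∧
      ord f + 1 ≤ ord (D1 f) ∧ ord f ≤ ord (D2 f) := by
  have hD1' : ∀ a ∈ Mtilde, ∃ h ∈ Mtilde, D1 a = x12 ^ 1 * h := fun a ha =>
    (Mtilde_le_mulStableSubalgebra D1 (fun i => ⟨(2 / 3 : ℂ) • D1vals i,
      Subalgebra.smul_mem _ (D1vals_mem i) _,
      by simp [hD1, Algebra.smul_def, map_ofNat]; ring⟩) ha).2
  have hD2' : ∀ a ∈ Mtilde, ∃ h ∈ Mtilde, D2 a = x12 ^ 0 * h := fun a ha =>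
    (Mtilde_le_mulStableSubalgebra D2 (fun i => ⟨D2vals i, D2vals_mem i, by rw [hD2]; ring⟩) ha).2
  have hx12₁ : D1 x12 = 0 := (hD1 1).trans (by simp [D1vals])
  have hx12₂ : D2 x12 = 0 := (hD2 1).trans (by simp [D2vals])
  obtain ⟨g₁, hg₁, e₁⟩ := hD1' f hf
  obtain ⟨g₂, hg₂, e₂⟩ := hD2' f hf
  refine ⟨⟨e₁ ▸ mul_mem (pow_mem (Xv_mem_Mtilde 1) 1) hg₁, by rwa [e₂, pow_zero, one_mul]⟩, ?_, ?_⟩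
  · exact_mod_cast add_le_ord_map hx12₁ hD1' hf
  · simpa using add_le_ord_map hx12₂ hD2' hf
end
end

section
/- The identity 3·D1(p0) = x12·(8·p0 − 12·Δ² − 12·Δ·x13·x21) holds in K; moreover D2(p0) = 0. -/
/- Common setup: K = ℂ(x11,x12,x13,x21,x22,x23,s1,s2,s3) realized as the fraction
field of the polynomial ring in nine variables over ℂ.  Variable indices:
0 = x11, 1 = x12, 2 = x13, 3 = x21, 4 = x22, 5 = x23, 6 = s1, 7 = s2, 8 = s3. -/

noncomputable section

open MvPolynomial

set_option maxHeartbeats 1000000 in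
/-- 3·D1(p0) = x12·(8·p0 − 12·Δ² − 12·Δ·x13·x21), and D2(p0) = 0. -/
theorem statement_4 (D1 D2 : Derivation ℂ Kf Kf)
    (hD1 : ∀ i, D1 (Xv i) = (2 / 3 : Kf) * x12 * D1vals i)
    (hD2 : ∀ i, D2 (Xv i) = D2vals i) :
    (3 : Kf) * D1 p0 = x12 * (8 * p0 - 12 * Δl ^ 2 - 12 * Δl * (x13 * x21)) ∧
      D2 p0 = 0 := by
  have e1 : ∀ i, D1 (Xv i) = (2 / 3 : Kf) * x12 * D1vals i := hD1
  have e2 : ∀ i, D2 (Xv i) = D2vals i := hD2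
  have h11 : D1 x11 = (2/3 : Kf) * x12 * (-x11) := by
    have := e1 0; simpa [x11, D1vals] using this
  have h13 : D1 x13 = (2/3 : Kf) * x12 * x13 := by
    have := e1 2; simpa [x13, D1vals] using this
  have h21 : D1 x21 = (2/3 : Kf) * x12 * x21 := by
    have := e1 3; simpa [x21, D1vals] using this
  have h22 : D1 x22 = (2/3 : Kf) * x12 * (2 * x22) := by
    have := e1 4; simpa [x22, D1vals] using this
  have hv5 : D1vals 5 = 0 := rfl
  have h23 : D1 x23 = 0 := by
    have := e1 5; rw [hv5] at this; simpa [x23] using this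
  have g22 : D2 x22 = 2 * (x13 * x21 - x11 * x23) := by
    have := e2 4; simpa [x22, D2vals] using this
  have g23 : D2 x23 = 2 * x13 * x22 := by
    have := e2 5; simpa [x23, D2vals] using this
  have g11 : D2 x11 = 0 := by have := e2 0; simpa [x11, D2vals] using this
  have g13 : D2 x13 = 0 := by have := e2 2; simpa [x13, D2vals] using this
  have g21 : D2 x21 = 0 := by have := e2 3; simpa [x21, D2vals] using this
  constructor
  · have : D1 p0 = D1 x11 * (x13 * x22 ^ 2) + x11 * (D1 x13 * x22 ^ 2 + x13 * (2 * x22 * D1 x22)) + 2 * Δl * (D1 x11 * x23 + x11 * D1 x23 - (D1 x13 * x21 + x13 * D1 x21)) := by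
      simp only [p0, Δl, map_add, Derivation.leibniz, Derivation.leibniz_pow, map_sub,
        smul_eq_mul]
      ring
    rw [this, h11, h13, h21, h22, h23, p0, Δl]
    ring
  · have : D2 p0 = D2 x11 * (x13 * x22 ^ 2) + x11 * (D2 x13 * x22 ^ 2 + x13 * (2 * x22 * D2 x22)) + 2 * Δl * (D2 x11 * x23 + x11 * D2 x23 - (D2 x13 * x21 + x13 * D2 x21)) := by
      simp only [p0, Δl, map_add, Derivation.leibniz, Derivation.leibniz_pow, map_sub,
        smul_eq_mul]
      ring
    rw [this, g11, g13, g21, g22, g23, Δl]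
    ring
end
end

section
/- Let A be an integral domain of characteristic zero and let q ∈ A be nonzero. Let h : ℤ × ℤ → A satisfy h(k, l) = 0 whenever k < 0 or l < 0, and (k+1)·h(k+1, l−1) = (l+1)·q·h(k−1, l+1) for all k, l ∈ ℤ. Then (i) h(k, l) = 0 whenever at least one of k and l is odd, and (ii) h(2r, 2n−2r) = C(n, r)·q^r·h(0, 2n) for all integers n ≥ 0 and 0 ≤ r ≤ n, where C(n, r) is the binomial coefficient. -/
/-- in an integral domain A of characteristic zero, if q ≠ 0 and
h : ℤ × ℤ → A vanishes whenever one of the indices is negative and satisfies the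
recurrence (k+1)·h(k+1, l−1) = (l+1)·q·h(k−1, l+1) for all k, l ∈ ℤ, then
(i) h(k,l) = 0 whenever k or l is odd, and
(ii) h(2r, 2n−2r) = C(n,r)·qʳ·h(0, 2n) for all 0 ≤ r ≤ n. -/
theorem statement_12 (A : Type*) [CommRing A] [IsDomain A] [CharZero A]
    (q : A) (hq : q ≠ 0) (h : ℤ → ℤ → A)
    (hneg : ∀ k l : ℤ, k < 0 ∨ l < 0 → h k l = 0)
    (hrec : ∀ k l : ℤ,
      (k + 1) • h (k + 1) (l - 1) = (l + 1) • (q * h (k - 1) (l + 1))) :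
    (∀ k l : ℤ, Odd k ∨ Odd l → h k l = 0) ∧
      ∀ n r : ℕ, r ≤ n →
        h (2 * (r : ℤ)) (2 * (n : ℤ) - 2 * (r : ℤ)) =
          (n.choose r) • (q ^ r * h 0 (2 * (n : ℤ))) := by
  -- part (i), odd k
  have hok : ∀ N : ℕ, ∀ k l : ℤ, k < N → Odd k → h k l = 0 := by
    intro N
    induction N with
    | zero => intro k l hk _; exact hneg k l (Or.inl (by exact_mod_cast hk))
    | succ N ih =>
      intro k l hk hkodd
      rcases lt_or_ge k 0 with hk0 | hk0
      · exact hneg k l (Or.inl hk0)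
      rcases lt_or_ge k N with h' | h'
      · exact ih k l h' hkodd
      have hprev : h (k - 2) (l + 2) = 0 := by
        rcases lt_or_ge (k - 2) 0 with h2 | h2
        · exact hneg _ _ (Or.inl h2)
        · exact ih (k - 2) (l + 2) (by omega) (by
            rcases hkodd with ⟨m, hm⟩; exact ⟨m - 1, by omega⟩)
      have hr := hrec (k - 1) (l + 1)
      have e1 : k - 1 + 1 = k := by ring
      have e2 : l + 1 - 1 = l := by ring
      have e3 : k - 1 - 1 = k - 2 := by ring
      have e4 : l + 1 + 1 = l + 2 := by ring
      rw [e1, e2, e3, e4, hprev] at hr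
      simp only [mul_zero, smul_zero] at hr
      have hkne : (k : A) ≠ 0 := by
        have : k ≠ 0 := by rcases hkodd with ⟨m, hm⟩; omega
        exact_mod_cast this
      rw [zsmul_eq_mul] at hr
      exact (mul_eq_zero.mp hr).resolve_left hkne
  have hok' : ∀ k l : ℤ, Odd k → h k l = 0 := by
    intro k l hk
    rcases lt_or_ge k 0 with h0 | h0
    · exact hneg k l (Or.inl h0)
    · exact hok (k.toNat + 1) k l (by omega) hk
  -- part (i), odd l
  have hol : ∀ N : ℕ, ∀ k l : ℤ, l < N → Odd l → h k l = 0 := by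
    intro N
    induction N with
    | zero => intro k l hl _; exact hneg k l (Or.inr (by exact_mod_cast hl))
    | succ N ih =>
      intro k l hl hlodd
      rcases lt_or_ge l 0 with hl0 | hl0
      · exact hneg k l (Or.inr hl0)
      rcases lt_or_ge l N with h' | h'
      · exact ih k l h' hlodd
      have hprev : h (k + 2) (l - 2) = 0 := by
        rcases lt_or_ge (l - 2) 0 with h2 | h2
        · exact hneg _ _ (Or.inr h2)
        · exact ih (k + 2) (l - 2) (by omega) (by
            rcases hlodd with ⟨m, hm⟩; exact ⟨m - 1, by omega⟩)
      have hr := hrec (k + 1) (l - 1)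
      have e1 : k + 1 + 1 = k + 2 := by ring
      have e2 : l - 1 - 1 = l - 2 := by ring
      have e3 : k + 1 - 1 = k := by ring
      have e4 : l - 1 + 1 = l := by ring
      rw [e1, e2, e3, e4, hprev] at hr
      simp only [smul_zero] at hr
      have hlne : (l : A) ≠ 0 := by
        have : l ≠ 0 := by rcases hlodd with ⟨m, hm⟩; omega
        exact_mod_cast this
      rw [zsmul_eq_mul] at hr
      have := hr.symm
      rcases mul_eq_zero.mp this with h1 | h1
      · exact absurd h1 hlne
      · exact (mul_eq_zero.mp h1).resolve_left hq
  refine ⟨?_, ?_⟩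
  · intro k l hkl
    rcases hkl with hk | hl
    · exact hok' k l hk
    · rcases lt_or_ge l 0 with h0 | h0
      · exact hneg k l (Or.inr h0)
      · exact hol (l.toNat + 1) k l (by omega) hl
  · intro n r
    induction r with
    | zero => intro _; simp
    | succ r ih =>
      intro hrn
      have ihr := ih (by omega)
      have hr := hrec (2 * r + 1) (2 * n - 2 * r - 1)
      have e1 : (2 * (r:ℤ) + 1 + 1) = 2 * ((r:ℕ):ℤ) + 2 := by ring
      have e3 : (2 * (r:ℤ) + 1 - 1) = 2 * (r:ℤ) := by ring
      have e4 : (2 * (n:ℤ) - 2 * (r:ℤ) - 1 + 1) = 2 * (n:ℤ) - 2 * (r:ℤ) := by ring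
      rw [e3, e4] at hr
      have e2 : (2 * (r:ℤ) + 2) = 2 * (((r:ℕ)+1 : ℕ):ℤ) := by push_cast; ring
      have e5 : (2 * (n:ℤ) - 2 * (r:ℤ) - 1 - 1) = 2 * (n:ℤ) - 2 * (((r:ℕ)+1 : ℕ):ℤ) := by
        push_cast; ring
      rw [show (2 * (r:ℤ) + 1 + 1) = 2 * (r:ℤ) + 2 by ring, e2, e5] at hr
      rw [ihr] at hr
      -- now hr : (2r+2) • h (2(r+1)) (2n - 2(r+1)) = (2n-2r-1+1) • (q * (choose • (q^r * h0)))
      have key : ((2 * ((r:ℕ)+1 : ℕ) : ℤ) : A) * h (2 * (((r:ℕ)+1 : ℕ):ℤ)) (2 * (n:ℤ) - 2 * (((r:ℕ)+1:ℕ):ℤ))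
          = ((2 * ((r:ℕ)+1 : ℕ) : ℤ) : A) * ((n.choose (r+1)) • (q ^ (r+1) * h 0 (2 * (n:ℤ)))) := by
        simp only [zsmul_eq_mul, nsmul_eq_mul] at hr
        simp only [nsmul_eq_mul]
        push_cast at hr ⊢
        rw [hr]
        have hc : ((r:ℕ)+1) * n.choose (r+1) = (n - r) * n.choose r := by
          rw [mul_comm, Nat.choose_succ_right_eq, mul_comm]
        have hc' : ((r:A)+1) * (n.choose (r+1) : A) = ((n:A) - (r:A)) * (n.choose r : A) := by
          have : (((r+1) * n.choose (r+1) : ℕ) : A) = (((n - r) * n.choose r : ℕ) : A) := by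
            exact_mod_cast congrArg (Nat.cast : ℕ → A) hc
          push_cast [Nat.cast_sub (le_of_lt (Nat.lt_of_lt_of_le (Nat.lt_succ_self r) hrn))] at this
          push_cast
          linear_combination this
        linear_combination (-2 : A) * q ^ (r+1) * h 0 (2 * (n:ℤ)) * hc'
      have h2ne : ((2 * ((r:ℕ)+1 : ℕ) : ℤ) : A) ≠ 0 := by
        have : (2 * ((r:ℕ)+1 : ℕ) : ℤ) ≠ 0 := by positivity
        exact_mod_cast this
      exact mul_left_cancel₀ h2ne key
end

section
/- For every integer n ≥ 1 and every real number t > 0, the matrix E(−t) = I − t·S is invertible and its inverse (I − t·S)^{−1} is totally nonnegative. -/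
noncomputable section

/-- The n×n shift matrix: S_{i,j} = 1 if j = i + 1 (1-based) and 0 otherwise. -/
def shiftM (n : ℕ) : Matrix (Fin n) (Fin n) ℝ :=
  Matrix.of fun i j => if (i : ℕ) + 1 = (j : ℕ) then 1 else 0

/-- A real square matrix is totally nonnegative if every minor (determinant of a
square submatrix given by strictly increasing row and column selections) is ≥ 0. -/
def TotallyNonneg {n : ℕ} (A : Matrix (Fin n) (Fin n) ℝ) : Prop :=
  ∀ (k : ℕ) (r c : Fin k → Fin n), StrictMono r → StrictMono c →
    0 ≤ (A.submatrix r c).det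

/-- A real square matrix is totally positive if every minor is > 0. -/
def TotallyPos {n : ℕ} (A : Matrix (Fin n) (Fin n) ℝ) : Prop :=
  ∀ (k : ℕ) (r c : Fin k → Fin n), StrictMono r → StrictMono c →
    0 < (A.submatrix r c).det

/-!
The inverse of `1 - t • S` is the upper triangular matrix `(t ^ (j - i))_{i ≤ j}` (the Neumann
series `∑ tᵏ Sᵏ`). Its submatrix on rows `r` and columns `c` factors as
`diag (t ^ (-r a)) * [r a ≤ c b] * diag (t ^ (c b))`, and every 0/1 matrix `[r a ≤ c b]` with
monotone `r`, `c` has nonnegative determinant.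
-/

open Matrix

section StepMatrix

variable {R α : Type*} [CommRing R] [PartialOrder R] [IsStrictOrderedRing R] [LinearOrder α]

def stepMatrix {k : ℕ} (r c : Fin k → α) : Matrix (Fin k) (Fin k) R :=
  of fun a b => if r a ≤ c b then 1 else 0

theorem det_stepMatrix_nonneg :
    ∀ {k : ℕ} {r c : Fin k → α}, Monotone r → Monotone c →
      0 ≤ (stepMatrix r c : Matrix _ _ R).det
  | 0, _, _, _, _ => by simp
  | k + 1, r, c, hr, hc => by
    by_cases hcol : ∀ a : Fin (k + 1), a ≠ 0 → c 0 < r a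
    · -- column 0 is supported on row 0: expand along it
      rw [det_succ_column_zero, Finset.sum_eq_single 0]
      · have hsub : (stepMatrix r c : Matrix _ _ R).submatrix Fin.succ Fin.succ
            = stepMatrix (r ∘ Fin.succ) (c ∘ Fin.succ) := rfl
        simp only [Fin.val_zero, pow_zero, one_mul, Fin.succAbove_zero, hsub]
        exact mul_nonneg (ite_nonneg zero_le_one le_rfl)
          (det_stepMatrix_nonneg (hr.comp Fin.strictMono_succ.monotone)
            (hc.comp Fin.strictMono_succ.monotone))
      · intro a _ ha
        simp [stepMatrix, not_le.mpr (hcol a ha)]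
      · simp
    · -- otherwise rows 0 and a are both constantly 1
      push Not at hcol
      obtain ⟨a, ha, hle⟩ := hcol
      refine (det_zero_of_row_eq (Ne.symm ha) (funext fun b => ?_)).ge
      have hb : c 0 ≤ c b := hc (Fin.zero_le b)
      simp [stepMatrix, (hr (Fin.zero_le a)).trans (hle.trans hb), hle.trans hb]

end StepMatrix

def geomUpper (n : ℕ) (t : ℝ) : Matrix (Fin n) (Fin n) ℝ :=
  of fun i j => if (i : ℕ) ≤ j then t ^ ((j : ℕ) - i) else 0

theorem shiftM_mul_apply {n : ℕ} (M : Matrix (Fin n) (Fin n) ℝ) (i j : Fin n) :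
    (shiftM n * M) i j = if h : (i : ℕ) + 1 < n then M ⟨i + 1, h⟩ j else 0 := by
  split_ifs with h
  · rw [mul_apply, Finset.sum_eq_single ⟨i + 1, h⟩]
    · simp [shiftM]
    · intro k _ hk
      simp only [shiftM, of_apply, ite_mul, one_mul, zero_mul, ite_eq_right_iff]
      exact fun e => absurd (Fin.ext e.symm) hk
    · simp
  · refine (mul_apply ..).trans (Fintype.sum_eq_zero _ fun k => ?_)
    simp [shiftM, show (i : ℕ) + 1 ≠ k by omega]

theorem one_sub_smul_shiftM_mul_geomUpper (n : ℕ) (t : ℝ) :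
    (1 - t • shiftM n) * geomUpper n t = 1 := by
  ext i j
  rw [sub_mul, one_mul, smul_mul, Matrix.sub_apply, Matrix.smul_apply, shiftM_mul_apply,
    one_apply]
  simp only [geomUpper, of_apply, smul_eq_mul, ← Fin.val_inj]
  have hpow (h : (i : ℕ) < j) : t ^ ((j : ℕ) - i) = t * t ^ ((j : ℕ) - (i + 1)) := by
    rw [← pow_succ', Nat.sub_add_eq, Nat.sub_add_cancel (Nat.sub_pos_of_lt h)]
  split_ifs <;> first | omega | simp_all

theorem submatrix_geomUpper {n k : ℕ} {t : ℝ} (ht : t ≠ 0) (r c : Fin k → Fin n) :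
    (geomUpper n t).submatrix r c =
      diagonal (fun a => (t ^ (r a : ℕ))⁻¹) * stepMatrix r c *
        diagonal (fun b => t ^ (c b : ℕ)) := by
  ext a b
  rw [mul_diagonal, diagonal_mul, submatrix_apply]
  simp only [geomUpper, stepMatrix, of_apply, Fin.le_def]
  split_ifs with h
  · rw [pow_sub₀ t ht h]
    ring
  · simp

theorem geomUpper_totallyNonneg (n : ℕ) {t : ℝ} (ht : 0 < t) :
    TotallyNonneg (geomUpper n t) := by
  intro k r c hr hc
  rw [submatrix_geomUpper ht.ne', det_mul, det_mul, det_diagonal, det_diagonal]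
  have hstep := det_stepMatrix_nonneg (R := ℝ) hr.monotone hc.monotone
  positivity

theorem statement_14_general (n : ℕ) (t : ℝ) (ht : 0 < t) :
    IsUnit (1 - t • shiftM n) ∧ TotallyNonneg (1 - t • shiftM n)⁻¹ := by
  have hinv := one_sub_smul_shiftM_mul_geomUpper n t
  refine ⟨IsUnit.of_mul_eq_one _ hinv, ?_⟩
  rw [inv_eq_right_inv hinv]
  exact geomUpper_totallyNonneg n ht

/-- for n ≥ 1 and t > 0, the matrix E(−t) = I − t·S is invertible
and its inverse is totally nonnegative. -/
theorem statement_14 (n : ℕ) (hn : 1 ≤ n) (t : ℝ) (ht : 0 < t) :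
    IsUnit (1 - t • shiftM n) ∧ TotallyNonneg (1 - t • shiftM n)⁻¹ :=
  statement_14_general n t ht
end
end

section
/- For every integer n ≥ 1, the matrix (I − S)ᵀ·(I − S) is invertible and X₀ := ((I − S)ᵀ·(I − S))^{−1} is totally nonnegative. -/
open Matrix

noncomputable section

-- pointwise arithmetic lemma
lemma min_sub_min (x w c : ℝ) (hcw : c ≤ w) :
    min x w - min x c = min (max (x - c) 0) (w - c) := by
  rcases le_total x c with h | h
  · rw [min_eq_left (le_trans h hcw), min_eq_left h, sub_self]
    rw [max_eq_right (by linarith)]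
    exact (min_eq_left (by linarith)).symm
  · rw [min_eq_right h, max_eq_left (by linarith)]
    rcases le_total x w with h2 | h2
    · rw [min_eq_left h2, min_eq_left (by linarith)]
    · rw [min_eq_right h2, min_eq_right (by linarith)]

lemma det_min_nonneg : ∀ (k : ℕ) (u v : Fin k → ℝ), Monotone u → Monotone v →
    (∀ a, 0 ≤ u a) → (∀ b, 0 ≤ v b) →
    0 ≤ (Matrix.of fun a b => min (u a) (v b)).det := by
  intro k
  induction k with
  | zero => intro u v _ _ _ _; simp [Matrix.det_isEmpty]
  | succ k IH =>
    -- first handle the case u 0 ≤ v 0, then use transpose symmetry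
    have key : ∀ (u v : Fin (k+1) → ℝ), Monotone u → Monotone v →
        (∀ a, 0 ≤ u a) → (∀ b, 0 ≤ v b) → u 0 ≤ v 0 →
        0 ≤ (Matrix.of fun a b => min (u a) (v b)).det := by
      intro u v hu hv hu0 hv0 huv
      set M : Matrix (Fin (k+1)) (Fin (k+1)) ℝ := Matrix.of fun a b => min (u a) (v b) with hM
      set F : Matrix (Fin (k+1)) (Fin (k+1)) ℝ :=
        Matrix.of fun t b => if t = 0 ∧ b ≠ 0 then (-1:ℝ) else 0 with hF
      set E : Matrix (Fin (k+1)) (Fin (k+1)) ℝ := 1 + F with hE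
      have hdetE : E.det = 1 := by
        have ht : E.BlockTriangular id := by
          intro a b hab
          have hab' : (b:Fin (k+1)) < a := hab
          simp only [hE, hF, Matrix.add_apply, Matrix.one_apply, Matrix.of_apply]
          have h1 : a ≠ b := ne_of_gt hab'
          have h2 : a ≠ 0 := by
            intro h; rw [h] at hab'; exact absurd hab' (by simp [h])
          simp [h1, h2]
        rw [Matrix.det_of_upperTriangular ht]
        apply Finset.prod_eq_one
        intro i _
        simp [hE, hF, Matrix.one_apply]
      -- entries of N = M * E
      have hMF : ∀ a b, (M * F) a b = if b = 0 then 0 else - M a 0 := by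
        intro a b
        rw [Matrix.mul_apply]
        rw [Finset.sum_eq_single 0]
        · simp only [hF, Matrix.of_apply]
          by_cases hb : b = 0 <;> simp [hb]
        · intro t _ ht
          simp [hF, ht]
        · simp
      have hN : ∀ a b, (M * E) a b = if b = 0 then M a 0 else M a b - M a 0 := by
        intro a b
        rw [hE, Matrix.mul_add, Matrix.mul_one, Matrix.add_apply, hMF]
        by_cases hb : b = 0 <;> simp [hb, sub_eq_add_neg]
      have hdetN : (M * E).det = M.det := by
        rw [Matrix.det_mul, hdetE, mul_one]
      -- expand along row 0
      have hrow : ∀ j : Fin (k+1), j ≠ 0 → (M * E) 0 j = 0 := by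
        intro j hj
        rw [hN, if_neg hj]
        have h1 : M 0 j = u 0 := by
          simp only [hM, Matrix.of_apply]
          exact min_eq_left (le_trans huv (hv (Fin.zero_le j)))
        have h2 : M 0 0 = u 0 := by
          simp only [hM, Matrix.of_apply]
          exact min_eq_left huv
        rw [h1, h2, sub_self]
      have h00 : (M * E) 0 0 = u 0 := by
        rw [hN, if_pos rfl]
        simp only [hM, Matrix.of_apply]
        exact min_eq_left huv
      have hexp : (M * E).det = u 0 * ((M * E).submatrix Fin.succ Fin.succ).det := by
        rw [Matrix.det_succ_row_zero]
        rw [Finset.sum_eq_single 0]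
        · rw [h00]
          simp [Fin.succAbove]
        · intro j _ hj
          rw [hrow j hj]; ring
        · simp
      -- identify the smaller matrix
      set u' : Fin k → ℝ := fun a => max (u a.succ - v 0) 0 with hu'
      set v' : Fin k → ℝ := fun b => v b.succ - v 0 with hv'
      have hsub : (M * E).submatrix Fin.succ Fin.succ
          = Matrix.of fun a b => min (u' a) (v' b) := by
        ext a b
        simp only [Matrix.submatrix_apply, Matrix.of_apply]
        rw [hN, if_neg (Fin.succ_ne_zero b)]
        simp only [hM, Matrix.of_apply, hu', hv']
        exact min_sub_min _ _ _ (hv (Fin.zero_le b.succ))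
      have hIH : 0 ≤ (Matrix.of fun a b => min (u' a) (v' b)).det := by
        apply IH
        · intro a b hab
          exact max_le_max (by simpa using hu (by exact Fin.succ_le_succ_iff.mpr hab : a.succ ≤ b.succ)) le_rfl
        · intro a b hab
          simpa [hv'] using hv (by exact Fin.succ_le_succ_iff.mpr hab : a.succ ≤ b.succ)
        · intro a; exact le_max_right _ _
        · intro b; simpa [hv'] using hv (Fin.zero_le b.succ)
      calc (0:ℝ) ≤ u 0 * (Matrix.of fun a b => min (u' a) (v' b)).det :=
            mul_nonneg (hu0 0) hIH
        _ = (M * E).det := by rw [hexp, hsub]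
        _ = M.det := hdetN
    intro u v hu hv hu0 hv0
    rcases le_total (u 0) (v 0) with h | h
    · exact key u v hu hv hu0 hv0 h
    · have := key v u hv hu hv0 hu0 h
      rw [← Matrix.det_transpose]
      convert this using 2
      ext a b
      simp [Matrix.transpose_apply, min_comm]

section Main

variable (n : ℕ)

def Umat : Matrix (Fin n) (Fin n) ℝ := Matrix.of fun i j => if i ≤ j then (1:ℝ) else 0

lemma AU_eq_one : (1 - shiftM n) * Umat n = 1 := by
  ext i j
  rw [Matrix.sub_mul, Matrix.one_mul, Matrix.sub_apply]
  have hSU : (shiftM n * Umat n) i j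
      = if (i:ℕ) + 1 ≤ (j:ℕ) then (1:ℝ) else 0 := by
    rw [Matrix.mul_apply]
    by_cases h : (i:ℕ) + 1 < n
    · rw [Finset.sum_eq_single ⟨(i:ℕ)+1, h⟩]
      · have h1 : (shiftM n) i ⟨(i:ℕ)+1, h⟩ = 1 := by simp [shiftM]
        have h2 : (Umat n) ⟨(i:ℕ)+1, h⟩ j = if (i:ℕ)+1 ≤ (j:ℕ) then (1:ℝ) else 0 := by
          show (if (⟨(i:ℕ)+1, h⟩ : Fin n) ≤ j then (1:ℝ) else 0) = _
          simp only [Fin.le_def]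
        rw [h1, h2, one_mul]
      · intro t _ ht
        have : (i:ℕ) + 1 ≠ (t:ℕ) := by
          intro hc; exact ht (Fin.ext hc.symm)
        simp [shiftM, this]
      · simp
    · have hz : ∀ t : Fin n, (shiftM n) i t * (Umat n) t j = 0 := by
        intro t
        have : (i:ℕ) + 1 ≠ (t:ℕ) := by have := t.isLt; omega
        simp [shiftM, this]
      rw [Finset.sum_eq_zero (fun t _ => hz t)]
      have : ¬ ((i:ℕ) + 1 ≤ (j:ℕ)) := by have := j.isLt; omega
      simp [this]
  rw [hSU]
  simp only [Umat, Matrix.of_apply, Matrix.one_apply, Fin.le_def, Fin.ext_iff]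
  split_ifs <;> (try norm_num) <;> omega

lemma UA_eq_one : Umat n * (1 - shiftM n) = 1 :=
  mul_eq_one_comm.mp (AU_eq_one n)

lemma PQ_eq_one : ((1 - shiftM n)ᵀ * (1 - shiftM n)) * (Umat n * (Umat n)ᵀ) = 1 := by
  have h1 : (1 - shiftM n) * (Umat n * (Umat n)ᵀ) = (Umat n)ᵀ := by
    rw [← Matrix.mul_assoc, AU_eq_one, Matrix.one_mul]
  rw [Matrix.mul_assoc, h1, ← Matrix.transpose_mul, UA_eq_one, Matrix.transpose_one]

lemma QP_eq_one : (Umat n * (Umat n)ᵀ) * ((1 - shiftM n)ᵀ * (1 - shiftM n)) = 1 := by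
  have h1 : (Umat n)ᵀ * ((1 - shiftM n)ᵀ * (1 - shiftM n))
      = (1 - shiftM n) := by
    rw [← Matrix.mul_assoc, ← Matrix.transpose_mul, AU_eq_one, Matrix.transpose_one,
      Matrix.one_mul]
  rw [Matrix.mul_assoc, h1, UA_eq_one]

lemma Q_apply (x y : Fin n) :
    (Umat n * (Umat n)ᵀ) x y = min ((n:ℝ) - (x:ℕ)) ((n:ℝ) - (y:ℕ)) := by
  rw [Matrix.mul_apply]
  have hterm : ∀ t : Fin n, (Umat n) x t * (Umat n)ᵀ t y
      = if max x y ≤ t then (1:ℝ) else 0 := by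
    intro t
    simp only [Umat, Matrix.transpose_apply, Matrix.of_apply, ite_mul, one_mul, zero_mul,
      mul_ite, mul_one, mul_zero]
    by_cases h1 : x ≤ t <;> by_cases h2 : y ≤ t <;>
      simp [h1, h2, max_le_iff]
  rw [Finset.sum_congr rfl (fun t _ => hterm t)]
  rw [Finset.sum_boole]
  have hcard : (Finset.univ.filter (fun t : Fin n => max x y ≤ t)).card
      = n - (max x y : Fin n) := by
    rw [show (Finset.univ.filter (fun t : Fin n => max x y ≤ t)) = Finset.Ici (max x y) from
      Finset.filter_le_eq_Ici]
    exact Fin.card_Ici _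
  rw [hcard]
  have hxy : ((max x y : Fin n) : ℕ) = max (x:ℕ) (y:ℕ) := by
    rcases le_total x y with h | h
    · rw [max_eq_right h, max_eq_right (Fin.le_def.mp h)]
    · rw [max_eq_left h, max_eq_left (Fin.le_def.mp h)]
  have hlt : max (x:ℕ) (y:ℕ) < n := by
    rcases max_cases (x:ℕ) (y:ℕ) with ⟨h,_⟩|⟨h,_⟩ <;> rw [h] <;> [exact x.isLt; exact y.isLt]
  rw [hxy]
  push_cast [Nat.cast_sub hlt.le]
  have key : ∀ a b : ℝ, (n:ℝ) - max a b = min ((n:ℝ) - a) ((n:ℝ) - b) := by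
    intro a b
    rcases le_total a b with h | h
    · rw [max_eq_right h, min_eq_right (by linarith)]
    · rw [max_eq_left h, min_eq_left (by linarith)]
  exact key _ _

end Main


/-- for n ≥ 1, the matrix (I − S)ᵀ·(I − S) is invertible and
X₀ := ((I − S)ᵀ·(I − S))⁻¹ is totally nonnegative. -/
theorem statement_15 (n : ℕ) (hn : 1 ≤ n) :
    IsUnit ((1 - shiftM n)ᵀ * (1 - shiftM n)) ∧
      TotallyNonneg ((1 - shiftM n)ᵀ * (1 - shiftM n))⁻¹ := by
  constructor
  · exact ⟨⟨_, _, PQ_eq_one n, QP_eq_one n⟩, rfl⟩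
  · rw [Matrix.inv_eq_right_inv (PQ_eq_one n)]
    intro k r c hr hc
    rw [← Matrix.det_submatrix_equiv_self (Fin.revPerm) (((Umat n * (Umat n)ᵀ)).submatrix r c)]
    have heq : (((Umat n * (Umat n)ᵀ).submatrix r c).submatrix Fin.revPerm Fin.revPerm)
        = Matrix.of fun a b => min ((n:ℝ) - ((r (Fin.rev a)):ℕ)) ((n:ℝ) - ((c (Fin.rev b)):ℕ)) := by
      ext a b
      simp only [Matrix.submatrix_apply, Matrix.of_apply, Equiv.coe_fn_mk]
      exact Q_apply n _ _
    rw [heq]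
    apply det_min_nonneg
    · intro a b hab
      have : Fin.rev b ≤ Fin.rev a := Fin.rev_le_rev.mpr hab
      have h2 : r (Fin.rev b) ≤ r (Fin.rev a) := hr.monotone this
      have := Fin.le_def.mp h2
      push_cast
      linarith [(Nat.cast_le (α := ℝ)).mpr this]
    · intro a b hab
      have : Fin.rev b ≤ Fin.rev a := Fin.rev_le_rev.mpr hab
      have h2 : c (Fin.rev b) ≤ c (Fin.rev a) := hc.monotone this
      have := Fin.le_def.mp h2
      push_cast
      linarith [(Nat.cast_le (α := ℝ)).mpr this]
    · intro a
      have := (r (Fin.rev a)).isLt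
      have : ((r (Fin.rev a) : ℕ) : ℝ) ≤ n := by exact_mod_cast this.le
      linarith
    · intro b
      have := (c (Fin.rev b)).isLt
      have : ((c (Fin.rev b) : ℕ) : ℝ) ≤ n := by exact_mod_cast this.le
      linarith
end
end

section
/- For every integer n ≥ 3, the matrix X₀ = ((I − S)ᵀ·(I − S))^{−1} satisfies (X₀)_{n−2,n}·(X₀)_{n,1} − (X₀)_{n−1,n}·(X₀)_{n−1,1} = −1 (i.e., the Cremmer–Gervais cluster variable ψ₂ evaluates to −1 at X₀). -/
open Matrix

noncomputable section

/-- X₀ = ((I − S)ᵀ·(I − S))⁻¹. -/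
def X0 (n : ℕ) : Matrix (Fin n) (Fin n) ℝ := ((1 - shiftM n)ᵀ * (1 - shiftM n))⁻¹


def Nmat (n : ℕ) : Matrix (Fin n) (Fin n) ℝ :=
  Matrix.of fun i j => if (i : ℕ) ≤ (j : ℕ) then 1 else 0

lemma mul_Nmat (n : ℕ) : (1 - shiftM n) * Nmat n = 1 := by
  ext i j
  rw [Matrix.mul_apply]
  simp only [Matrix.sub_apply, Matrix.one_apply, shiftM, Nmat, Matrix.of_apply,
    Fin.ext_iff, sub_mul]
  rw [Finset.sum_sub_distrib]
  have h1 : ∀ k : Fin n, (if (i:ℕ) = (k:ℕ) then (1:ℝ) else 0) * (if (k:ℕ) ≤ (j:ℕ) then 1 else 0)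
      = if (k:ℕ) = (i:ℕ) then (if (i:ℕ) ≤ (j:ℕ) then (1:ℝ) else 0) else 0 := by
    intro k; split_ifs <;> simp_all
  have h2 : ∀ k : Fin n, (if (i:ℕ) + 1 = (k:ℕ) then (1:ℝ) else 0) * (if (k:ℕ) ≤ (j:ℕ) then 1 else 0)
      = if (k:ℕ) = (i:ℕ) + 1 then (if (i:ℕ) + 1 ≤ (j:ℕ) then (1:ℝ) else 0) else 0 := by
    intro k; split_ifs <;> simp_all
  simp only [h1, h2]
  rw [Fin.sum_univ_eq_sum_range (fun k => if k = (i:ℕ) then (if (i:ℕ) ≤ (j:ℕ) then (1:ℝ) else 0) else 0),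
      Fin.sum_univ_eq_sum_range (fun k => if k = (i:ℕ)+1 then (if (i:ℕ)+1 ≤ (j:ℕ) then (1:ℝ) else 0) else 0),
      Finset.sum_ite_eq', Finset.sum_ite_eq']
  have hi := i.isLt; have hj := j.isLt
  simp only [Finset.mem_range]
  split_ifs <;> simp_all <;> omega

lemma X0_eq (n : ℕ) : X0 n = Nmat n * (Nmat n)ᵀ := by
  have hinv : (1 - shiftM n)⁻¹ = Nmat n :=
    Matrix.inv_eq_right_inv (mul_Nmat n)
  rw [X0, Matrix.mul_inv_rev, ← Matrix.transpose_nonsing_inv, hinv]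

lemma X0_apply (n : ℕ) (i j : Fin n) :
    X0 n i j = ((n - max (i:ℕ) (j:ℕ) : ℕ) : ℝ) := by
  rw [X0_eq, Matrix.mul_apply]
  simp only [Nmat, Matrix.transpose_apply, Matrix.of_apply]
  have h : ∀ k : Fin n, (if (i:ℕ) ≤ (k:ℕ) then (1:ℝ) else 0) * (if (j:ℕ) ≤ (k:ℕ) then 1 else 0)
      = if max (i:ℕ) (j:ℕ) ≤ (k:ℕ) then (1:ℝ) else 0 := by
    intro k; split_ifs <;> simp_all <;> omega
  simp only [h]
  rw [Fin.sum_univ_eq_sum_range (fun k => if max (i:ℕ) (j:ℕ) ≤ k then (1:ℝ) else 0)]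
  rw [Finset.sum_ite, Finset.sum_const, Finset.sum_const]
  have : Finset.filter (fun k => max (i:ℕ) (j:ℕ) ≤ k) (Finset.range n) = Finset.Ico (max (i:ℕ) (j:ℕ)) n := by
    ext k; simp [Finset.mem_range, Finset.mem_Ico]; omega
  rw [this, Nat.card_Ico]
  simp

/-- for n ≥ 3, the matrix X₀ = ((I − S)ᵀ·(I − S))⁻¹ satisfies
(X₀)_{n−2,n}·(X₀)_{n,1} − (X₀)_{n−1,n}·(X₀)_{n−1,1} = −1 (entries in 1-based
indexing; below indices are 0-based, so row n−2 is ⟨n−3,_⟩, etc.). -/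
theorem statement_16 (n : ℕ) (hn : 3 ≤ n) :
    X0 n ⟨n - 3, by omega⟩ ⟨n - 1, by omega⟩ * X0 n ⟨n - 1, by omega⟩ ⟨0, by omega⟩ -
      X0 n ⟨n - 2, by omega⟩ ⟨n - 1, by omega⟩ * X0 n ⟨n - 2, by omega⟩ ⟨0, by omega⟩
      = -1 := by
  rw [X0_apply, X0_apply, X0_apply, X0_apply]
  have h1 : n - max (n-3) (n-1) = 1 := by omega
  have h2 : n - max (n-1) 0 = 1 := by omega
  have h3 : n - max (n-2) (n-1) = 1 := by omega
  have h4 : n - max (n-2) 0 = 2 := by omega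
  simp only [h1, h2, h3, h4]
  norm_num
end
end
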